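/- arXiv:1109.4599 — 2 statements merged into one kernel-verified Lean document; each statement's English description precedes it below -/
import Mathlib

section
/- Let P_1, P_2 ∈ (0, 1/2) with P_1 ≠ P_2, set w_i = ln((1 − P_i)/P_i) for i = 1, 2, and let D_1, D_2 be independent random variables with P(D_i = w_i) = P_i and P(D_i = −w_i) = 1 − P_i. Then P(D_1 + D_2 > 0) = min{P_1, P_2}. -/
open MeasureTheory ProbabilityTheory

private lemma pep_aux
    {Ω : Type*} [MeasurableSpace Ω] (μ : Measure Ω) [IsProbabilityMeasure μ]
    (P₁ P₂ : ℝ) (hP₁0 : 0 < P₁) (hP₁1 : P₁ < 1) (hP₂0 : 0 < P₂) (hP₂1 : P₂ < 1)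
    (w₁ w₂ : ℝ) (hw₂0 : 0 < w₂) (hw : w₂ < w₁)
    (D₁ D₂ : Ω → ℝ) (hD₁ : Measurable D₁) (hD₂ : Measurable D₂)
    (hindep : IndepFun D₁ D₂ μ)
    (h1pos : (μ {ω | D₁ ω = w₁}).toReal = P₁) (h1neg : (μ {ω | D₁ ω = -w₁}).toReal = 1 - P₁)
    (h2pos : (μ {ω | D₂ ω = w₂}).toReal = P₂) (h2neg : (μ {ω | D₂ ω = -w₂}).toReal = 1 - P₂) :
    (μ {ω | 0 < D₁ ω + D₂ ω}).toReal = P₁ := by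
  have hw₁0 : 0 < w₁ := hw₂0.trans hw
  set A : Set Ω := D₁ ⁻¹' {w₁} with hAdef
  set A' : Set Ω := D₁ ⁻¹' {-w₁} with hA'def
  set B : Set Ω := D₂ ⁻¹' {w₂} with hBdef
  set B' : Set Ω := D₂ ⁻¹' {-w₂} with hB'def
  have hA : MeasurableSet A := hD₁ (measurableSet_singleton _)
  have hA' : MeasurableSet A' := hD₁ (measurableSet_singleton _)
  have hB : MeasurableSet B := hD₂ (measurableSet_singleton _)
  have hB' : MeasurableSet B' := hD₂ (measurableSet_singleton _)
  have eA : {ω | D₁ ω = w₁} = A := rfl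
  have eA' : {ω | D₁ ω = -w₁} = A' := rfl
  have eB : {ω | D₂ ω = w₂} = B := rfl
  have eB' : {ω | D₂ ω = -w₂} = B' := rfl
  rw [eA] at h1pos; rw [eA'] at h1neg; rw [eB] at h2pos; rw [eB'] at h2neg
  have μA : μ A = ENNReal.ofReal P₁ := by
    rw [← h1pos, ENNReal.ofReal_toReal (measure_ne_top μ _)]
  have μA' : μ A' = ENNReal.ofReal (1 - P₁) := by
    rw [← h1neg, ENNReal.ofReal_toReal (measure_ne_top μ _)]
  have μB : μ B = ENNReal.ofReal P₂ := by
    rw [← h2pos, ENNReal.ofReal_toReal (measure_ne_top μ _)]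
  have μB' : μ B' = ENNReal.ofReal (1 - P₂) := by
    rw [← h2neg, ENNReal.ofReal_toReal (measure_ne_top μ _)]
  have hdisjA : Disjoint A A' := by
    apply Set.disjoint_left.mpr
    intro ω h1 h2
    simp only [hAdef, hA'def, Set.mem_preimage, Set.mem_singleton_iff] at h1 h2
    rw [h1] at h2; linarith
  have hdisjB : Disjoint B B' := by
    apply Set.disjoint_left.mpr
    intro ω h1 h2
    simp only [hBdef, hB'def, Set.mem_preimage, Set.mem_singleton_iff] at h1 h2
    rw [h1] at h2; linarith
  have hAfull : μ (A ∪ A') = 1 := by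
    rw [measure_union hdisjA hA', μA, μA',
      ← ENNReal.ofReal_add hP₁0.le (by linarith)]
    norm_num
  have hBfull : μ (B ∪ B') = 1 := by
    rw [measure_union hdisjB hB', μB, μB',
      ← ENNReal.ofReal_add hP₂0.le (by linarith)]
    norm_num
  have hAc : μ (A ∪ A')ᶜ = 0 := by
    rw [measure_compl (hA.union hA') (measure_ne_top μ _), hAfull, measure_univ, tsub_self]
  have hBc : μ (B ∪ B')ᶜ = 0 := by
    rw [measure_compl (hB.union hB') (measure_ne_top μ _), hBfull, measure_univ, tsub_self]
  have hNc : μ ((A ∪ A') ∩ (B ∪ B'))ᶜ = 0 := by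
    rw [Set.compl_inter]
    exact measure_union_null hAc hBc
  have hkey : {ω | 0 < D₁ ω + D₂ ω} ∩ ((A ∪ A') ∩ (B ∪ B')) = A ∩ (B ∪ B') := by
    ext ω
    simp only [Set.mem_inter_iff, Set.mem_union, Set.mem_setOf_eq, hAdef, hA'def, hBdef,
      hB'def, Set.mem_preimage, Set.mem_singleton_iff]
    constructor
    · rintro ⟨hpos, h1 | h1, h2⟩
      · exact ⟨h1, h2⟩
      · rcases h2 with h2 | h2 <;> rw [h1, h2] at hpos <;> linarith
    · rintro ⟨h1, h2⟩
      refine ⟨?_, Or.inl h1, h2⟩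
      rcases h2 with h2 | h2 <;> rw [h1, h2] <;> linarith
  have hμS : μ {ω | 0 < D₁ ω + D₂ ω} = μ (A ∩ (B ∪ B')) := by
    rw [← hkey]
    exact (measure_inter_conull hNc).symm
  have hindB : μ (A ∩ B) = μ A * μ B :=
    hindep.measure_inter_preimage_eq_mul _ _ (measurableSet_singleton _) (measurableSet_singleton _)
  have hindB' : μ (A ∩ B') = μ A * μ B' :=
    hindep.measure_inter_preimage_eq_mul _ _ (measurableSet_singleton _) (measurableSet_singleton _)
  have hsplit : μ (A ∩ (B ∪ B')) = μ A * μ B + μ A * μ B' := by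
    rw [Set.inter_union_distrib_left,
      measure_union (hdisjB.mono Set.inter_subset_right Set.inter_subset_right) (hA.inter hB'),
      hindB, hindB']
  rw [hμS, hsplit, ENNReal.toReal_add (by finiteness) (by finiteness),
    ENNReal.toReal_mul, ENNReal.toReal_mul, h1pos, h2pos, h2neg]
  ring

/-- Corollary 1: let `P₁, P₂ ∈ (0, 1/2)` with `P₁ ≠ P₂`, set `wᵢ = ln((1 - Pᵢ)/Pᵢ)`,
and let `D₁, D₂` be independent random variables with `P(Dᵢ = wᵢ) = Pᵢ` and
`P(Dᵢ = -wᵢ) = 1 - Pᵢ`.  Then `P(D₁ + D₂ > 0) = min P₁ P₂`. -/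
theorem pep_hamming_distance_two
    {Ω : Type*} [MeasurableSpace Ω] (μ : Measure Ω) [IsProbabilityMeasure μ]
    (P₁ P₂ : ℝ) (hP₁ : P₁ ∈ Set.Ioo (0 : ℝ) (1 / 2)) (hP₂ : P₂ ∈ Set.Ioo (0 : ℝ) (1 / 2))
    (hPne : P₁ ≠ P₂)
    (w₁ w₂ : ℝ) (hw₁ : w₁ = Real.log ((1 - P₁) / P₁)) (hw₂ : w₂ = Real.log ((1 - P₂) / P₂))
    (D₁ D₂ : Ω → ℝ) (hD₁ : Measurable D₁) (hD₂ : Measurable D₂)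
    (hindep : IndepFun D₁ D₂ μ)
    (h1pos : (μ {ω | D₁ ω = w₁}).toReal = P₁) (h1neg : (μ {ω | D₁ ω = -w₁}).toReal = 1 - P₁)
    (h2pos : (μ {ω | D₂ ω = w₂}).toReal = P₂) (h2neg : (μ {ω | D₂ ω = -w₂}).toReal = 1 - P₂) :
    (μ {ω | 0 < D₁ ω + D₂ ω}).toReal = min P₁ P₂ := by
  obtain ⟨hP₁0, hP₁h⟩ := hP₁
  obtain ⟨hP₂0, hP₂h⟩ := hP₂
  have hwpos : ∀ P : ℝ, 0 < P → P < 1 / 2 → 0 < Real.log ((1 - P) / P) := by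
    intro P h0 hh
    apply Real.log_pos
    rw [lt_div_iff₀ h0]; linarith
  have hmono : ∀ Pa Pb : ℝ, 0 < Pa → Pa < Pb → Pb < 1 / 2 →
      Real.log ((1 - Pb) / Pb) < Real.log ((1 - Pa) / Pa) := by
    intro Pa Pb ha hab hb
    apply Real.log_lt_log (div_pos (by linarith) (by linarith))
    rw [div_lt_div_iff₀ (by linarith) ha]
    nlinarith
  rcases hPne.lt_or_gt with h | h
  · rw [min_eq_left h.le]
    exact pep_aux μ P₁ P₂ hP₁0 (by linarith) hP₂0 (by linarith) w₁ w₂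
      (hw₂ ▸ hwpos P₂ hP₂0 hP₂h) (by rw [hw₁, hw₂]; exact hmono P₁ P₂ hP₁0 h hP₂h)
      D₁ D₂ hD₁ hD₂ hindep h1pos h1neg h2pos h2neg
  · rw [min_eq_right h.le]
    have : {ω | 0 < D₁ ω + D₂ ω} = {ω | 0 < D₂ ω + D₁ ω} := by
      ext ω; simp [add_comm]
    rw [this]
    exact pep_aux μ P₂ P₁ hP₂0 (by linarith) hP₁0 (by linarith) w₂ w₁
      (hw₁ ▸ hwpos P₁ hP₁0 hP₁h) (by rw [hw₁, hw₂]; exact hmono P₂ P₁ hP₂0 h hP₁h)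
      D₂ D₁ hD₂ hD₁ hindep.symm h2pos h2neg h1pos h1neg
end

section
/- Let X_1, …, X_n and Y be mutually independent exponential random variables with means σ_1², …, σ_n² and σ_Y² (all positive), let g_1, …, g_n ∈ {0,1}, and let Q(t) = (1/√(2π)) ∫_t^∞ e^{−s²/2} ds. For γ > 0 define the per-realization error probabilities P_t = Q(√(2γ X_t)) and P_Y = Q(√(2γ Y)), the network-coded first-hop error probability P_A = Σ_{t=1}^n g_t P_t Π_{r=t+1}^n (1 − 2 g_r P_r), and the dual-hop cross-over probability P = P_A + P_Y − 2 P_A P_Y. Then lim_{γ→∞} 4γ · E[P] = Σ_{t=1}^n g_t/σ_t² + 1/σ_Y². -/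
open scoped ENNReal NNReal


open MeasureTheory ProbabilityTheory Filter Finset

/-- The Gaussian tail function `Q t = (1/√(2π)) ∫_t^∞ e^{-s²/2} ds`. -/
noncomputable def gaussQ (t : ℝ) : ℝ :=
  (1 / Real.sqrt (2 * Real.pi)) * ∫ s in Set.Ioi t, Real.exp (-s ^ 2 / 2)



lemma gexp_eq : (fun s : ℝ => Real.exp (-s ^ 2 / 2)) = fun s => Real.exp (-(1/2) * s ^ 2) := by
  funext s; ring_nf

lemma integrable_gexp : MeasureTheory.Integrable (fun s : ℝ => Real.exp (-s ^ 2 / 2)) := by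
  rw [gexp_eq]; exact integrable_exp_neg_mul_sq (by norm_num)

lemma integrableOn_gexp (a : ℝ) :
    MeasureTheory.IntegrableOn (fun s : ℝ => Real.exp (-s ^ 2 / 2)) (Set.Ioi a) :=
  integrable_gexp.integrableOn

lemma gaussQ_nonneg (t : ℝ) : 0 ≤ gaussQ t := by
  apply mul_nonneg
  · positivity
  · exact setIntegral_nonneg measurableSet_Ioi (fun s _ => (Real.exp_pos _).le)

lemma gaussQ_antitone : Antitone gaussQ := by
  intro s t hst
  apply mul_le_mul_of_nonneg_left _ (by positivity)
  exact setIntegral_mono_set (integrableOn_gexp s)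
    (Filter.Eventually.of_forall fun x => (Real.exp_pos _).le)
    (HasSubset.Subset.eventuallyLE (Set.Ioi_subset_Ioi hst))

lemma gaussQ_measurable : Measurable gaussQ := gaussQ_antitone.measurable

lemma sqrt_two_pi_pos : 0 < Real.sqrt (2 * Real.pi) :=
  Real.sqrt_pos.mpr (by positivity)

lemma integral_gexp_Ioi_zero : ∫ s in Set.Ioi (0:ℝ), Real.exp (-s ^ 2 / 2) = Real.sqrt (2 * Real.pi) / 2 := by
  rw [gexp_eq]
  rw [integral_gaussian_Ioi (1/2), show Real.pi / (1/2) = 2 * Real.pi from by ring]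

lemma gaussQ_zero : gaussQ 0 = 1 / 2 := by
  rw [gaussQ, integral_gexp_Ioi_zero]
  field_simp

lemma gaussQ_le_half {t : ℝ} (ht : 0 ≤ t) : gaussQ t ≤ 1 / 2 := by
  rw [← gaussQ_zero]
  exact gaussQ_antitone ht

lemma sqrt_two_pi_mul_gaussQ (t : ℝ) :
    Real.sqrt (2 * Real.pi) * gaussQ t = ∫ s in Set.Ioi t, Real.exp (-s ^ 2 / 2) := by
  rw [gaussQ]
  field_simp

lemma exponentialPDFReal_eq (r x : ℝ) :
    exponentialPDFReal r x = if 0 ≤ x then r * Real.exp (-(r*x)) else 0 := by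
  rw [exponentialPDFReal, gammaPDFReal]
  simp only [Real.rpow_one, Real.Gamma_one, div_one, sub_self, Real.rpow_zero, mul_one]

lemma integral_gaussQ_expMeasure {r γ : ℝ} (hr : 0 < r) (hγ : 0 < γ) :
    ∫ x, gaussQ (Real.sqrt (2 * γ * x)) ∂(expMeasure r)
      = 1/2 - 1/(2 * Real.sqrt (1 + r/γ)) := by
  have hpm : Measurable (fun x => (exponentialPDFReal r x).toNNReal) :=
    (measurable_exponentialPDFReal r).real_toNNReal
  set C := 1 / Real.sqrt (2 * Real.pi) with hC
  set F : ℝ → ℝ → ℝ := fun x s =>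
    if 2*γ*x < s^2 then r * Real.exp (-(r*x)) * Real.exp (-s^2/2) else 0 with hF
  -- Step A : write as a Lebesgue integral against the density
  have hA : ∫ x, gaussQ (Real.sqrt (2*γ*x)) ∂(expMeasure r)
      = ∫ x, exponentialPDFReal r x * gaussQ (Real.sqrt (2*γ*x)) := by
    rw [show expMeasure r
        = volume.withDensity (fun x => ((exponentialPDFReal r x).toNNReal : ℝ≥0∞)) from rfl,
      integral_withDensity_eq_integral_smul hpm]
    congr 1; funext x
    rw [NNReal.smul_def, Real.coe_toNNReal _ (exponentialPDFReal_nonneg hr x), smul_eq_mul]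
  -- Step B : restrict to the positive axis
  have hB : ∫ x, exponentialPDFReal r x * gaussQ (Real.sqrt (2*γ*x))
      = ∫ x in Set.Ioi (0:ℝ), r * Real.exp (-(r*x)) * gaussQ (Real.sqrt (2*γ*x)) := by
    rw [← integral_Ici_eq_integral_Ioi, ← integral_indicator measurableSet_Ici]
    congr 1; funext x
    rw [Set.indicator_apply, exponentialPDFReal_eq]
    by_cases hx : (0:ℝ) ≤ x
    · simp [hx, Set.mem_Ici]
    · simp [hx, Set.mem_Ici]
  -- Step C : pointwise, express the inner integrand as an integral
  have hC1 : ∀ x ∈ Set.Ioi (0:ℝ),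
      r * Real.exp (-(r*x)) * gaussQ (Real.sqrt (2*γ*x))
        = C * ∫ s in Set.Ioi (0:ℝ), F x s := by
    intro x hx
    have hx0 : (0:ℝ) ≤ x := le_of_lt hx
    have ha : (0:ℝ) ≤ Real.sqrt (2*γ*x) := Real.sqrt_nonneg _
    have key : ∫ s in Set.Ioi (0:ℝ), F x s
        = ∫ s in Set.Ioi (0:ℝ),
            (Set.Ioi (Real.sqrt (2*γ*x))).indicator
              (fun s => r * Real.exp (-(r*x)) * Real.exp (-s^2/2)) s := by
      apply setIntegral_congr_fun measurableSet_Ioi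
      intro s hs
      rw [Set.indicator_apply]
      have : (2*γ*x < s^2) ↔ Real.sqrt (2*γ*x) < s := (Real.sqrt_lt' hs).symm
      simp only [hF, Set.mem_Ioi, this]
    rw [key, setIntegral_indicator measurableSet_Ioi,
      show Set.Ioi (0:ℝ) ∩ Set.Ioi (Real.sqrt (2*γ*x)) = Set.Ioi (Real.sqrt (2*γ*x)) by
        rw [Set.Ioi_inter_Ioi, max_eq_right ha],
      integral_const_mul, ← sqrt_two_pi_mul_gaussQ]
    rw [hC]
    have := sqrt_two_pi_pos
    field_simp
  -- integrability on the product space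
  have hS : MeasurableSet {p : ℝ × ℝ | 2*γ*p.1 < p.2^2} := by
    apply measurableSet_lt <;> fun_prop
  have hGint : Integrable (fun p : ℝ × ℝ => (r * Real.exp (-(r*p.1))) * Real.exp (-p.2^2/2))
      ((volume.restrict (Set.Ioi 0)).prod (volume.restrict (Set.Ioi 0))) := by
    have h1 : MeasureTheory.IntegrableOn (fun x : ℝ => Real.exp (-r * x)) (Set.Ioi 0) :=
      exp_neg_integrableOn_Ioi 0 hr
    have h2 : MeasureTheory.IntegrableOn (fun x : ℝ => r * Real.exp (-(r * x))) (Set.Ioi 0) := by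
      have := h1.const_mul r; simp only [neg_mul] at this; exact this
    exact MeasureTheory.Integrable.mul_prod h2 (integrableOn_gexp 0)
  have hFint : Integrable (Function.uncurry F)
      ((volume.restrict (Set.Ioi 0)).prod (volume.restrict (Set.Ioi 0))) := by
    have heq : Function.uncurry F = Set.indicator {p : ℝ × ℝ | 2*γ*p.1 < p.2^2}
        (fun p => (r * Real.exp (-(r*p.1))) * Real.exp (-p.2^2/2)) := by
      funext p
      rw [Set.indicator_apply]
      simp only [Function.uncurry, hF, Set.mem_setOf_eq]
    rw [heq]
    exact hGint.indicator hS
  have hswap : ∫ x in Set.Ioi (0:ℝ), ∫ s in Set.Ioi (0:ℝ), F x s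
      = ∫ s in Set.Ioi (0:ℝ), ∫ x in Set.Ioi (0:ℝ), F x s := integral_integral_swap hFint
  -- the inner integral in x
  have hinner : ∀ s ∈ Set.Ioi (0:ℝ),
      ∫ x in Set.Ioi (0:ℝ), F x s
        = (1 - Real.exp (-(r * (s^2/(2*γ))))) * Real.exp (-s^2/2) := by
    intro s hs
    rw [Set.mem_Ioi] at hs
    set b := s^2/(2*γ) with hb
    have hbpos : 0 < b := div_pos (pow_pos hs 2) (by positivity)
    have hcond : ∀ x : ℝ, (2*γ*x < s^2) ↔ x < b := by
      intro x
      rw [hb, lt_div_iff₀ (by positivity : (0:ℝ) < 2*γ), mul_comm]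
    have hptw : ∀ x : ℝ, F x s
        = (Set.Iio b).indicator (fun x => r * Real.exp (-(r*x)) * Real.exp (-s^2/2)) x := by
      intro x; rw [Set.indicator_apply]; simp only [hF, Set.mem_Iio, hcond x]
    rw [setIntegral_congr_fun measurableSet_Ioi (fun x _ => hptw x),
      setIntegral_indicator measurableSet_Iio,
      show Set.Ioi (0:ℝ) ∩ Set.Iio b = Set.Ioo 0 b from Set.Ioi_inter_Iio,
      integral_mul_const]
    congr 1
    rw [← integral_Ioc_eq_integral_Ioo, ← intervalIntegral.integral_of_le hbpos.le,
      intervalIntegral.integral_eq_sub_of_hasDerivAt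
        (fun x _ => hasDerivAt_neg_exp_mul_exp)
        ((by fun_prop : Continuous fun x : ℝ => r * Real.exp (-(r*x))).intervalIntegrable 0 b)]
    simp [hb]
    ring
  -- the outer Gaussian integrals
  have hout : ∫ s in Set.Ioi (0:ℝ), (1 - Real.exp (-(r * (s^2/(2*γ))))) * Real.exp (-s^2/2)
      = Real.sqrt (2*Real.pi)/2 - Real.sqrt (2*Real.pi) / (2 * Real.sqrt (1 + r/γ)) := by
    have hpos : (0:ℝ) < (1 + r/γ)/2 := by positivity
    have hrw : ∀ s : ℝ, (1 - Real.exp (-(r * (s^2/(2*γ))))) * Real.exp (-s^2/2)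
        = Real.exp (-(1/2) * s^2) - Real.exp (-((1 + r/γ)/2) * s^2) := by
      intro s
      rw [sub_mul, one_mul, ← Real.exp_add]
      congr 2
      · ring
      · field_simp; ring
    simp_rw [hrw]
    rw [integral_sub ((integrable_exp_neg_mul_sq (by norm_num)).integrableOn)
        ((integrable_exp_neg_mul_sq hpos).integrableOn),
      integral_gaussian_Ioi, integral_gaussian_Ioi,
      show Real.pi / (1/2) = 2*Real.pi from by ring,
      show Real.pi / ((1 + r/γ)/2) = (2*Real.pi) / (1 + r/γ) from by field_simp,
      Real.sqrt_div (by positivity : (0:ℝ) ≤ 2*Real.pi)]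
    ring
  rw [hA, hB, setIntegral_congr_fun measurableSet_Ioi hC1, integral_const_mul, hswap,
    setIntegral_congr_fun measurableSet_Ioi hinner, hout, hC]
  have h1 : Real.sqrt (2*Real.pi) ≠ 0 := ne_of_gt sqrt_two_pi_pos
  have h2 : Real.sqrt (1 + r/γ) ≠ 0 := ne_of_gt (Real.sqrt_pos.mpr (by positivity))
  field_simp

lemma tendsto_four_mul_closed {r : ℝ} (hr : 0 < r) :
    Tendsto (fun γ : ℝ => 4 * γ * (1/2 - 1/(2 * Real.sqrt (1 + r/γ)))) atTop (nhds r) := by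
  have h0 : Tendsto (fun γ : ℝ => r / γ) atTop (nhds 0) :=
    Tendsto.div_atTop tendsto_const_nhds tendsto_id
  have hs : Continuous (fun u : ℝ => Real.sqrt (1+u)) :=
    Real.continuous_sqrt.comp (continuous_const.add continuous_id)
  have hne : Real.sqrt (1+(0:ℝ)) * (Real.sqrt (1+(0:ℝ)) + 1) ≠ 0 := by
    norm_num
  have hcont : ContinuousAt
      (fun u : ℝ => 2 * r / (Real.sqrt (1+u) * (Real.sqrt (1+u) + 1))) 0 :=
    continuousAt_const.div ((hs.continuousAt).mul ((hs.continuousAt).add continuousAt_const)) hne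
  have hcomp := hcont.tendsto.comp h0
  have hval : 2 * r / (Real.sqrt (1+(0:ℝ)) * (Real.sqrt (1+(0:ℝ)) + 1)) = r := by
    norm_num
  rw [hval] at hcomp
  apply Tendsto.congr' _ hcomp
  filter_upwards [eventually_gt_atTop 0] with γ hγ
  have hv : (0:ℝ) < 1 + r/γ := by positivity
  show 2 * r / (Real.sqrt (1+r/γ) * (Real.sqrt (1+r/γ) + 1))
      = 4 * γ * (1/2 - 1/(2*Real.sqrt (1+r/γ)))
  have hsp : 0 < Real.sqrt (1 + r/γ) := Real.sqrt_pos.mpr hv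
  have hsq : Real.sqrt (1+r/γ) ^ 2 = 1 + r/γ := Real.sq_sqrt hv.le
  set s := Real.sqrt (1 + r/γ) with hsdef
  have hr2 : r = γ * s^2 - γ := by
    rw [hsq]; field_simp; ring
  have hs1 : s + 1 ≠ 0 := by positivity
  calc 2 * r / (s * (s + 1)) = (γ * s^2 - γ) * 2 / (s * (s+1)) := by rw [← hr2]; ring
    _ = 2*γ*(s-1)/s := by
        rw [show γ * s^2 - γ = γ*(s-1)*(s+1) from by ring, mul_comm s (s+1),
          show γ*(s-1)*(s+1)*2 = (s+1)*(2*γ*(s-1)) from by ring, mul_div_mul_left _ _ hs1]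
    _ = 4 * γ * (1/2 - 1/(2*s)) := by field_simp; ring

lemma one_sub_sum_le_prod_one_sub {ι : Type*} (s : Finset ι) (f : ι → ℝ)
    (h0 : ∀ i ∈ s, 0 ≤ f i) (h1 : ∀ i ∈ s, f i ≤ 1) :
    1 - ∑ i ∈ s, f i ≤ ∏ i ∈ s, (1 - f i) := by
  induction s using Finset.cons_induction with
  | empty => simp
  | cons i s hi ih =>
    rw [Finset.prod_cons, Finset.sum_cons]
    have hf0 := h0 i (Finset.mem_cons_self i s)
    have hf1 := h1 i (Finset.mem_cons_self i s)
    have ih' := ih (fun j hj => h0 j (Finset.mem_cons_of_mem hj))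
      (fun j hj => h1 j (Finset.mem_cons_of_mem hj))
    have hsum : 0 ≤ ∑ j ∈ s, f j :=
      Finset.sum_nonneg (fun j hj => h0 j (Finset.mem_cons_of_mem hj))
    nlinarith [mul_le_mul_of_nonneg_left ih' (by linarith : (0:ℝ) ≤ 1 - f i),
      mul_nonneg hf0 hsum]

lemma crossover_bounds {m : ℕ} (a : Fin m → ℝ) (b : ℝ)
    (ha0 : ∀ t, 0 ≤ a t) (hah : ∀ t, a t ≤ 1/2) (hb0 : 0 ≤ b) (hbh : b ≤ 1/2) :
    (∑ t, a t) + b - (2 * (∑ t, ∑ r ∈ Finset.Ioi t, a t * a r) + 2 * (∑ t, a t) * b)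
      ≤ (∑ t, a t * ∏ r ∈ Finset.Ioi t, (1 - 2 * a r)) + b
        - 2 * (∑ t, a t * ∏ r ∈ Finset.Ioi t, (1 - 2 * a r)) * b ∧
    (∑ t, a t * ∏ r ∈ Finset.Ioi t, (1 - 2 * a r)) + b
        - 2 * (∑ t, a t * ∏ r ∈ Finset.Ioi t, (1 - 2 * a r)) * b ≤ (∑ t, a t) + b := by
  set A := ∑ t, a t * ∏ r ∈ Finset.Ioi t, (1 - 2 * a r) with hA
  set S := ∑ t : Fin m, a t with hS
  have hfac0 : ∀ t r : Fin m, 0 ≤ 1 - 2 * a r := fun t r => by linarith [hah r]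
  have hA0 : 0 ≤ A := Finset.sum_nonneg fun t _ =>
    mul_nonneg (ha0 t) (Finset.prod_nonneg fun r _ => hfac0 t r)
  have hAS : A ≤ S := by
    apply Finset.sum_le_sum
    intro t _
    calc a t * ∏ r ∈ Finset.Ioi t, (1 - 2 * a r)
        ≤ a t * 1 := by
          apply mul_le_mul_of_nonneg_left _ (ha0 t)
          exact Finset.prod_le_one (fun r _ => hfac0 t r) (fun r _ => by linarith [ha0 r])
      _ = a t := mul_one _
  have hAlow : S - 2 * (∑ t, ∑ r ∈ Finset.Ioi t, a t * a r) ≤ A := by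
    have hsplit : S - 2 * (∑ t, ∑ r ∈ Finset.Ioi t, a t * a r)
        = ∑ t, (a t - 2 * ∑ r ∈ Finset.Ioi t, a t * a r) := by
      rw [Finset.sum_sub_distrib, ← Finset.mul_sum, hS]
    rw [hsplit, hA]
    apply Finset.sum_le_sum
    intro t _
    have key : 1 - ∑ r ∈ Finset.Ioi t, 2 * a r ≤ ∏ r ∈ Finset.Ioi t, (1 - 2 * a r) :=
      one_sub_sum_le_prod_one_sub _ _ (fun r _ => by linarith [ha0 r])
        (fun r _ => by linarith [hah r])
    have := mul_le_mul_of_nonneg_left key (ha0 t)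
    have hsum2 : ∑ r ∈ Finset.Ioi t, a t * (2 * a r)
        = 2 * ∑ r ∈ Finset.Ioi t, a t * a r := by
      rw [Finset.mul_sum]
      apply Finset.sum_congr rfl
      intro r _
      ring
    calc a t - 2 * ∑ r ∈ Finset.Ioi t, a t * a r
        = a t * (1 - ∑ r ∈ Finset.Ioi t, 2 * a r) := by
          rw [mul_sub, mul_one, Finset.mul_sum, Finset.mul_sum]
          congr 1
          exact Finset.sum_congr rfl (fun r _ => by ring)
      _ ≤ a t * ∏ r ∈ Finset.Ioi t, (1 - 2 * a r) := this
  have hSb : A * b ≤ S * b := mul_le_mul_of_nonneg_right hAS hb0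
  have hAb0 : 0 ≤ A * b := mul_nonneg hA0 hb0
  constructor
  · nlinarith
  · nlinarith
/-- Averaged dual-hop network-coded cross-over probability: let `X 1, …, X n` (the
source-to-relay squared gains) and `Y = X (last)` (the relay-to-destination squared
gain) be mutually independent exponentials with means `σ_t²` resp. `σ_Y²`, and let
`g t ∈ {0,1}`.  With per-realization error probabilities `P_t = Q(√(2γ X_t))`,
`P_Y = Q(√(2γ Y))`, first-hop probability
`P_A = Σ_t g_t P_t Π_{r>t} (1 − 2 g_r P_r)` and dual-hop probability
`P = P_A + P_Y − 2 P_A P_Y`, one has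
`lim_{γ→∞} 4γ · E[P] = Σ_t g_t/σ_t² + 1/σ_Y²`. -/
theorem relayed_crossover_high_snr_limit
    {Ω : Type*} [MeasurableSpace Ω] (μ : Measure Ω) [IsProbabilityMeasure μ]
    (n : ℕ) (hn : 1 ≤ n) (X : Fin (n + 1) → Ω → ℝ) (hXmeas : ∀ i, Measurable (X i))
    (hindep : iIndepFun X μ)
    (σsq : Fin (n + 1) → ℝ) (hσ : ∀ i, 0 < σsq i)
    (hdist : ∀ i, Measure.map (X i) μ = expMeasure (1 / σsq i))
    (g : Fin n → ℝ) (hg : ∀ t, g t = 0 ∨ g t = 1)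
    (PA PY : ℝ → Ω → ℝ)
    (hPA : ∀ γ ω, PA γ ω = ∑ t : Fin n,
        g t * gaussQ (Real.sqrt (2 * γ * X t.castSucc ω))
          * ∏ r ∈ Finset.Ioi t, (1 - 2 * g r * gaussQ (Real.sqrt (2 * γ * X r.castSucc ω))))
    (hPY : ∀ γ ω, PY γ ω = gaussQ (Real.sqrt (2 * γ * X (Fin.last n) ω))) :
    Tendsto (fun γ : ℝ =>
        4 * γ * ∫ ω, (PA γ ω + PY γ ω - 2 * PA γ ω * PY γ ω) ∂μ)
      atTop
      (nhds ((∑ t : Fin n, g t / σsq t.castSucc) + 1 / σsq (Fin.last n))) := by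
  classical
  -- basic facts about the per-realization error probabilities
  have hφmeas : ∀ γ : ℝ, Measurable (fun x : ℝ => gaussQ (Real.sqrt (2 * γ * x))) := fun γ =>
    gaussQ_measurable.comp (Real.continuous_sqrt.measurable.comp (measurable_id.const_mul (2*γ)))
  have hPmeas : ∀ (γ : ℝ) (i : Fin (n+1)),
      Measurable (fun ω => gaussQ (Real.sqrt (2 * γ * X i ω))) :=
    fun γ i => (hφmeas γ).comp (hXmeas i)
  have hP0 : ∀ (γ : ℝ) (i : Fin (n+1)) (ω : Ω), 0 ≤ gaussQ (Real.sqrt (2 * γ * X i ω)) :=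
    fun γ i ω => gaussQ_nonneg _
  have hPh : ∀ (γ : ℝ) (i : Fin (n+1)) (ω : Ω), gaussQ (Real.sqrt (2 * γ * X i ω)) ≤ 1/2 :=
    fun γ i ω => gaussQ_le_half (Real.sqrt_nonneg _)
  have hbint : ∀ (f : Ω → ℝ) (c : ℝ), Measurable f → (∀ ω, |f ω| ≤ c) → Integrable f μ := by
    intro f c hf hc
    exact (integrable_const c).mono' hf.aestronglyMeasurable
      (Filter.Eventually.of_forall fun ω => by simpa using hc ω)
  have hPint : ∀ (γ : ℝ) (i : Fin (n+1)),
      Integrable (fun ω => gaussQ (Real.sqrt (2 * γ * X i ω))) μ := by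
    intro γ i
    apply hbint _ (1/2) (hPmeas γ i)
    intro ω
    rw [abs_of_nonneg (hP0 γ i ω)]
    exact hPh γ i ω
  set e : Fin (n+1) → ℝ → ℝ :=
    fun i γ => ∫ ω, gaussQ (Real.sqrt (2 * γ * X i ω)) ∂μ with hedef
  have hg0 : ∀ t, 0 ≤ g t := by
    intro t; rcases hg t with h|h <;> rw [h] <;> norm_num
  have hg1 : ∀ t, g t ≤ 1 := by
    intro t; rcases hg t with h|h <;> rw [h] <;> norm_num
  -- closed form for the average error probability and its high-SNR limits
  have hclosed : ∀ (i : Fin (n+1)) (γ : ℝ), 0 < γ →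
      e i γ = 1/2 - 1/(2*Real.sqrt (1 + (1/σsq i)/γ)) := by
    intro i γ hγ
    have h1 : e i γ = ∫ x, gaussQ (Real.sqrt (2*γ*x)) ∂(Measure.map (X i) μ) :=
      (integral_map (hXmeas i).aemeasurable ((hφmeas γ).aestronglyMeasurable)).symm
    rw [h1, hdist i, integral_gaussQ_expMeasure (by have := hσ i; positivity) hγ]
  have hlim : ∀ i, Tendsto (fun γ => 4*γ*(e i γ)) atTop (nhds (1/σsq i)) := by
    intro i
    apply Tendsto.congr' _
      (tendsto_four_mul_closed (show (0:ℝ) < 1/σsq i by have := hσ i; positivity))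
    filter_upwards [eventually_gt_atTop 0] with γ hγ
    rw [hclosed i γ hγ]
  have hlim0 : ∀ i, Tendsto (fun γ => e i γ) atTop (nhds 0) := by
    intro i
    have h4 : Tendsto (fun γ : ℝ => 1/(4*γ)) atTop (nhds 0) :=
      Tendsto.div_atTop tendsto_const_nhds (Tendsto.const_mul_atTop (by norm_num) tendsto_id)
    have h5 := (hlim i).mul h4
    rw [mul_zero] at h5
    apply Tendsto.congr' _ h5
    filter_upwards [eventually_gt_atTop 0] with γ hγ
    have h4γ : (4:ℝ)*γ ≠ 0 := ne_of_gt (by linarith)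
    field_simp
  -- independence: the averaged cross terms factorize
  have hInd : ∀ (γ : ℝ) (i j : Fin (n+1)), i ≠ j →
      (∫ ω, gaussQ (Real.sqrt (2 * γ * X i ω)) * gaussQ (Real.sqrt (2 * γ * X j ω)) ∂μ)
        = e i γ * e j γ := by
    intro γ i j hij
    have h1 : IndepFun (X i) (X j) μ := hindep.indepFun hij
    have h2 : IndepFun (fun ω => gaussQ (Real.sqrt (2 * γ * X i ω)))
        (fun ω => gaussQ (Real.sqrt (2 * γ * X j ω))) μ :=
      h1.comp (hφmeas γ) (hφmeas γ)
    exact h2.integral_mul_eq_mul_integral (hPmeas γ i).aestronglyMeasurable (hPmeas γ j).aestronglyMeasurable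
  -- measurability / integrability of the various pieces
  have hPAmeas : ∀ γ, Measurable (PA γ) := by
    intro γ
    have h1 : PA γ = fun ω => ∑ t : Fin n,
        g t * gaussQ (Real.sqrt (2 * γ * X t.castSucc ω))
          * ∏ r ∈ Finset.Ioi t, (1 - 2 * g r * gaussQ (Real.sqrt (2 * γ * X r.castSucc ω))) :=
      funext (hPA γ)
    rw [h1]
    apply Finset.measurable_sum
    intro t _
    exact ((hPmeas γ t.castSucc).const_mul (g t)).mul
      (Finset.measurable_prod _ fun r _ =>
        measurable_const.sub ((hPmeas γ r.castSucc).const_mul (2 * g r)))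
  have haQ0 : ∀ (γ : ℝ) (ω : Ω) (t : Fin n),
      0 ≤ g t * gaussQ (Real.sqrt (2 * γ * X t.castSucc ω)) :=
    fun γ ω t => mul_nonneg (hg0 t) (hP0 _ _ _)
  have haQh : ∀ (γ : ℝ) (ω : Ω) (t : Fin n),
      g t * gaussQ (Real.sqrt (2 * γ * X t.castSucc ω)) ≤ 1/2 := by
    intro γ ω t
    calc g t * gaussQ (Real.sqrt (2 * γ * X t.castSucc ω)) ≤ 1 * (1/2) :=
          mul_le_mul (hg1 t) (hPh γ _ ω) (hP0 γ _ ω) zero_le_one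
      _ = 1/2 := by norm_num
  have habs : ∀ (γ : ℝ) (ω : Ω) (t : Fin n),
      |g t * gaussQ (Real.sqrt (2 * γ * X t.castSucc ω))
        * ∏ r ∈ Finset.Ioi t, (1 - 2 * g r * gaussQ (Real.sqrt (2 * γ * X r.castSucc ω)))| ≤ 1 := by
    intro γ ω t
    rw [abs_mul]
    have h1 : |g t * gaussQ (Real.sqrt (2 * γ * X t.castSucc ω))| ≤ 1 := by
      rw [abs_of_nonneg (haQ0 γ ω t)]
      linarith [haQh γ ω t]
    have h2 : |∏ r ∈ Finset.Ioi t,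
        (1 - 2 * g r * gaussQ (Real.sqrt (2 * γ * X r.castSucc ω)))| ≤ 1 := by
      rw [Finset.abs_prod]
      apply Finset.prod_le_one (fun r _ => abs_nonneg _)
      intro r _
      rw [abs_le]
      have h3 : 2 * g r * gaussQ (Real.sqrt (2 * γ * X r.castSucc ω))
          = 2 * (g r * gaussQ (Real.sqrt (2 * γ * X r.castSucc ω))) := by ring
      constructor <;> rw [h3] <;> [linarith [haQh γ ω r]; linarith [haQ0 γ ω r]]
    calc |g t * gaussQ (Real.sqrt (2 * γ * X t.castSucc ω))|
          * |∏ r ∈ Finset.Ioi t, (1 - 2 * g r * gaussQ (Real.sqrt (2 * γ * X r.castSucc ω)))|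
        ≤ 1 * 1 := mul_le_mul h1 h2 (abs_nonneg _) zero_le_one
      _ = 1 := by norm_num
  have hPAbd : ∀ γ ω, |PA γ ω| ≤ (n:ℝ) := by
    intro γ ω
    rw [hPA γ ω]
    refine (Finset.abs_sum_le_sum_abs _ _).trans ?_
    calc ∑ t : Fin n, |g t * gaussQ (Real.sqrt (2 * γ * X t.castSucc ω))
          * ∏ r ∈ Finset.Ioi t, (1 - 2 * g r * gaussQ (Real.sqrt (2 * γ * X r.castSucc ω)))|
        ≤ ∑ _t : Fin n, (1:ℝ) := Finset.sum_le_sum (fun t _ => habs γ ω t)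
      _ = n := by simp
  have hPAint : ∀ γ, Integrable (PA γ) μ := fun γ => hbint _ _ (hPAmeas γ) (hPAbd γ)
  have hPYeq : ∀ γ, PY γ = fun ω => gaussQ (Real.sqrt (2 * γ * X (Fin.last n) ω)) :=
    fun γ => funext (hPY γ)
  have hPYmeas : ∀ γ, Measurable (PY γ) := fun γ => by rw [hPYeq γ]; exact hPmeas γ _
  have hPYint : ∀ γ, Integrable (PY γ) μ := fun γ => by rw [hPYeq γ]; exact hPint γ _
  have hPYbd : ∀ γ ω, |PY γ ω| ≤ 1 := by
    intro γ ω
    rw [hPY γ ω, abs_of_nonneg (hP0 γ _ ω)]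
    linarith [hPh γ (Fin.last n) ω]
  have hfint : ∀ γ, Integrable (fun ω => PA γ ω + PY γ ω - 2 * PA γ ω * PY γ ω) μ := by
    intro γ
    have hprod : Integrable (fun ω => PA γ ω * PY γ ω) μ := by
      apply hbint _ ((n:ℝ)*1) ((hPAmeas γ).mul (hPYmeas γ))
      intro ω
      simp only [Pi.mul_apply]
      rw [abs_mul]
      exact mul_le_mul (hPAbd γ ω) (hPYbd γ ω) (abs_nonneg _) (Nat.cast_nonneg n)
    exact ((((hPAint γ).add (hPYint γ)).sub (hprod.const_mul 2)).congr
      (Filter.Eventually.of_forall fun ω => by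
        simp only [Pi.add_apply, Pi.sub_apply]
        ring))
  have hSint : ∀ γ, Integrable
      (fun ω => ∑ t : Fin n, g t * gaussQ (Real.sqrt (2 * γ * X t.castSucc ω))) μ :=
    fun γ => integrable_finset_sum _ (fun t _ => (hPint γ t.castSucc).const_mul (g t))
  -- pointwise bounds
  have hbounds : ∀ (γ : ℝ) (ω : Ω),
      ((∑ t : Fin n, g t * gaussQ (Real.sqrt (2 * γ * X t.castSucc ω)))
          + gaussQ (Real.sqrt (2 * γ * X (Fin.last n) ω))
        - (2 * (∑ t : Fin n, ∑ r ∈ Finset.Ioi t,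
              (g t * gaussQ (Real.sqrt (2 * γ * X t.castSucc ω)))
                * (g r * gaussQ (Real.sqrt (2 * γ * X r.castSucc ω))))
           + 2 * (∑ t : Fin n, g t * gaussQ (Real.sqrt (2 * γ * X t.castSucc ω)))
              * gaussQ (Real.sqrt (2 * γ * X (Fin.last n) ω)))
        ≤ PA γ ω + PY γ ω - 2 * PA γ ω * PY γ ω)
      ∧ PA γ ω + PY γ ω - 2 * PA γ ω * PY γ ω
        ≤ (∑ t : Fin n, g t * gaussQ (Real.sqrt (2 * γ * X t.castSucc ω)))
            + gaussQ (Real.sqrt (2 * γ * X (Fin.last n) ω)) := by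
    intro γ ω
    have hPAeq : PA γ ω = ∑ t : Fin n, (g t * gaussQ (Real.sqrt (2 * γ * X t.castSucc ω)))
        * ∏ r ∈ Finset.Ioi t, (1 - 2 * (g r * gaussQ (Real.sqrt (2 * γ * X r.castSucc ω)))) := by
      rw [hPA γ ω]
      apply Finset.sum_congr rfl
      intro t _
      congr 1
      apply Finset.prod_congr rfl
      intro r _
      ring
    rw [hPAeq, hPY γ ω]
    exact crossover_bounds (fun t => g t * gaussQ (Real.sqrt (2 * γ * X t.castSucc ω)))
      (gaussQ (Real.sqrt (2 * γ * X (Fin.last n) ω)))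
      (fun t => haQ0 γ ω t) (fun t => haQh γ ω t) (hP0 γ _ ω) (hPh γ _ ω)
  -- value of the upper-bound integral
  have hUval : ∀ γ : ℝ, ∫ ω, ((∑ t : Fin n, g t * gaussQ (Real.sqrt (2 * γ * X t.castSucc ω)))
        + gaussQ (Real.sqrt (2 * γ * X (Fin.last n) ω))) ∂μ
      = (∑ t : Fin n, g t * e t.castSucc γ) + e (Fin.last n) γ := by
    intro γ
    rw [integral_add (hSint γ) (hPint γ (Fin.last n)),
      integral_finset_sum _ (fun t _ => (hPint γ t.castSucc).const_mul (g t))]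
    simp only [hedef]
    congr 1
    apply Finset.sum_congr rfl
    intro t _
    rw [integral_const_mul]
  have hclaimU : ∀ γ : ℝ, (∫ ω, (PA γ ω + PY γ ω - 2 * PA γ ω * PY γ ω) ∂μ)
      ≤ (∑ t : Fin n, g t * e t.castSucc γ) + e (Fin.last n) γ := by
    intro γ
    rw [← hUval γ]
    exact integral_mono (hfint γ) ((hSint γ).add (hPint γ (Fin.last n)))
      (fun ω => (hbounds γ ω).2)
  -- the cross terms
  have hprint : ∀ (γ : ℝ) (t r : Fin n), Integrable (fun ω =>
      (g t * gaussQ (Real.sqrt (2 * γ * X t.castSucc ω)))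
        * (g r * gaussQ (Real.sqrt (2 * γ * X r.castSucc ω)))) μ := by
    intro γ t r
    apply hbint _ 1 (((hPmeas γ t.castSucc).const_mul (g t)).mul
      ((hPmeas γ r.castSucc).const_mul (g r)))
    intro ω
    simp only [Pi.mul_apply]
    rw [abs_mul]
    have h1 : |g t * gaussQ (Real.sqrt (2 * γ * X t.castSucc ω))| ≤ 1 := by
      rw [abs_of_nonneg (haQ0 γ ω t)]; linarith [haQh γ ω t]
    have h2 : |g r * gaussQ (Real.sqrt (2 * γ * X r.castSucc ω))| ≤ 1 := by
      rw [abs_of_nonneg (haQ0 γ ω r)]; linarith [haQh γ ω r]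
    calc |g t * gaussQ (Real.sqrt (2 * γ * X t.castSucc ω))|
          * |g r * gaussQ (Real.sqrt (2 * γ * X r.castSucc ω))|
        ≤ 1 * 1 := mul_le_mul h1 h2 (abs_nonneg _) zero_le_one
      _ = 1 := by norm_num
  have hw1int : ∀ γ : ℝ, Integrable (fun ω => ∑ t : Fin n, ∑ r ∈ Finset.Ioi t,
      (g t * gaussQ (Real.sqrt (2 * γ * X t.castSucc ω)))
        * (g r * gaussQ (Real.sqrt (2 * γ * X r.castSucc ω)))) μ :=
    fun γ => integrable_finset_sum _
      (fun t _ => integrable_finset_sum _ (fun r _ => hprint γ t r))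
  have hw2int : ∀ γ : ℝ, Integrable (fun ω =>
      (∑ t : Fin n, g t * gaussQ (Real.sqrt (2 * γ * X t.castSucc ω)))
        * gaussQ (Real.sqrt (2 * γ * X (Fin.last n) ω))) μ := by
    intro γ
    apply hbint _ ((n:ℝ) * 1)
      ((Finset.measurable_sum _ (fun t _ => (hPmeas γ t.castSucc).const_mul (g t))).mul
        (hPmeas γ (Fin.last n)))
    intro ω
    simp only [Pi.mul_apply]
    rw [abs_mul]
    apply mul_le_mul _ _ (abs_nonneg _) (Nat.cast_nonneg n)
    · refine (Finset.abs_sum_le_sum_abs _ _).trans ?_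
      calc ∑ t : Fin n, |g t * gaussQ (Real.sqrt (2 * γ * X t.castSucc ω))|
          ≤ ∑ _t : Fin n, (1:ℝ) := by
            apply Finset.sum_le_sum
            intro t _
            rw [abs_of_nonneg (haQ0 γ ω t)]
            linarith [haQh γ ω t]
        _ = n := by simp
    · rw [abs_of_nonneg (hP0 γ _ ω)]
      linarith [hPh γ (Fin.last n) ω]
  have hw1val : ∀ γ : ℝ, ∫ ω, (∑ t : Fin n, ∑ r ∈ Finset.Ioi t,
      (g t * gaussQ (Real.sqrt (2 * γ * X t.castSucc ω)))
        * (g r * gaussQ (Real.sqrt (2 * γ * X r.castSucc ω)))) ∂μ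
      = ∑ t : Fin n, ∑ r ∈ Finset.Ioi t, (g t * g r) * (e t.castSucc γ * e r.castSucc γ) := by
    intro γ
    rw [integral_finset_sum _ (fun t _ => integrable_finset_sum _ (fun r _ => hprint γ t r))]
    apply Finset.sum_congr rfl
    intro t _
    rw [integral_finset_sum _ (fun r _ => hprint γ t r)]
    apply Finset.sum_congr rfl
    intro r hr
    have hne : (t.castSucc : Fin (n+1)) ≠ r.castSucc := by
      have hlt := Finset.mem_Ioi.mp hr
      exact fun hcontra => absurd (Fin.castSucc_injective n hcontra) (ne_of_lt hlt)
    have hre : (fun ω => (g t * gaussQ (Real.sqrt (2 * γ * X t.castSucc ω)))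
        * (g r * gaussQ (Real.sqrt (2 * γ * X r.castSucc ω))))
        = fun ω => (g t * g r) * (gaussQ (Real.sqrt (2 * γ * X t.castSucc ω))
            * gaussQ (Real.sqrt (2 * γ * X r.castSucc ω))) := by
      funext ω; ring
    rw [hre, integral_const_mul, hInd γ _ _ hne]
  have hw2val : ∀ γ : ℝ, ∫ ω, ((∑ t : Fin n, g t * gaussQ (Real.sqrt (2 * γ * X t.castSucc ω)))
        * gaussQ (Real.sqrt (2 * γ * X (Fin.last n) ω))) ∂μ
      = ∑ t : Fin n, g t * (e t.castSucc γ * e (Fin.last n) γ) := by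
    intro γ
    have hti : ∀ t : Fin n, Integrable (fun ω =>
        g t * (gaussQ (Real.sqrt (2 * γ * X t.castSucc ω))
          * gaussQ (Real.sqrt (2 * γ * X (Fin.last n) ω)))) μ := by
      intro t
      apply Integrable.const_mul
      apply hbint _ (1/2 * 1) ((hPmeas γ t.castSucc).mul (hPmeas γ (Fin.last n)))
      intro ω
      simp only [Pi.mul_apply]
      rw [abs_mul, abs_of_nonneg (hP0 γ _ ω), abs_of_nonneg (hP0 γ _ ω)]
      exact mul_le_mul (hPh γ _ ω) ((hPh γ _ ω).trans (by norm_num)) (hP0 γ _ ω) (by norm_num)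
    have hre : (fun ω => (∑ t : Fin n, g t * gaussQ (Real.sqrt (2 * γ * X t.castSucc ω)))
        * gaussQ (Real.sqrt (2 * γ * X (Fin.last n) ω)))
        = fun ω => ∑ t : Fin n, g t * (gaussQ (Real.sqrt (2 * γ * X t.castSucc ω))
            * gaussQ (Real.sqrt (2 * γ * X (Fin.last n) ω))) := by
      funext ω
      rw [Finset.sum_mul]
      exact Finset.sum_congr rfl (fun t _ => by ring)
    rw [hre, integral_finset_sum _ (fun t _ => hti t)]
    apply Finset.sum_congr rfl
    intro t _
    rw [integral_const_mul, hInd γ _ _ (Fin.castSucc_lt_last t).ne]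
  -- the lower-bound integral
  have hw2int' : ∀ γ : ℝ, Integrable (fun ω =>
      2 * (∑ t : Fin n, g t * gaussQ (Real.sqrt (2 * γ * X t.castSucc ω)))
        * gaussQ (Real.sqrt (2 * γ * X (Fin.last n) ω))) μ :=
    fun γ => ((hw2int γ).const_mul 2).congr (Filter.Eventually.of_forall fun ω => by ring)
  have hLint : ∀ γ : ℝ, Integrable (fun ω =>
      (∑ t : Fin n, g t * gaussQ (Real.sqrt (2 * γ * X t.castSucc ω)))
        + gaussQ (Real.sqrt (2 * γ * X (Fin.last n) ω))
        - (2 * (∑ t : Fin n, ∑ r ∈ Finset.Ioi t,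
              (g t * gaussQ (Real.sqrt (2 * γ * X t.castSucc ω)))
                * (g r * gaussQ (Real.sqrt (2 * γ * X r.castSucc ω))))
           + 2 * (∑ t : Fin n, g t * gaussQ (Real.sqrt (2 * γ * X t.castSucc ω)))
              * gaussQ (Real.sqrt (2 * γ * X (Fin.last n) ω)))) μ :=
    fun γ => ((hSint γ).add (hPint γ (Fin.last n))).sub
      (((hw1int γ).const_mul 2).add (hw2int' γ))
  have hLval : ∀ γ : ℝ, ∫ ω,
      ((∑ t : Fin n, g t * gaussQ (Real.sqrt (2 * γ * X t.castSucc ω)))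
        + gaussQ (Real.sqrt (2 * γ * X (Fin.last n) ω))
        - (2 * (∑ t : Fin n, ∑ r ∈ Finset.Ioi t,
              (g t * gaussQ (Real.sqrt (2 * γ * X t.castSucc ω)))
                * (g r * gaussQ (Real.sqrt (2 * γ * X r.castSucc ω))))
           + 2 * (∑ t : Fin n, g t * gaussQ (Real.sqrt (2 * γ * X t.castSucc ω)))
              * gaussQ (Real.sqrt (2 * γ * X (Fin.last n) ω)))) ∂μ
      = ((∑ t : Fin n, g t * e t.castSucc γ) + e (Fin.last n) γ)
        - (2 * (∑ t : Fin n, ∑ r ∈ Finset.Ioi t,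
              (g t * g r) * (e t.castSucc γ * e r.castSucc γ))
           + 2 * (∑ t : Fin n, g t * (e t.castSucc γ * e (Fin.last n) γ))) := by
    intro γ
    have hu : Integrable (fun ω => (∑ t : Fin n, g t * gaussQ (Real.sqrt (2 * γ * X t.castSucc ω)))
        + gaussQ (Real.sqrt (2 * γ * X (Fin.last n) ω))) μ :=
      (hSint γ).add (hPint γ (Fin.last n))
    have hw1 : Integrable (fun ω => 2 * (∑ t : Fin n, ∑ r ∈ Finset.Ioi t,
        (g t * gaussQ (Real.sqrt (2 * γ * X t.castSucc ω)))
          * (g r * gaussQ (Real.sqrt (2 * γ * X r.castSucc ω))))) μ :=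
      (hw1int γ).const_mul 2
    have hw : Integrable (fun ω => 2 * (∑ t : Fin n, ∑ r ∈ Finset.Ioi t,
        (g t * gaussQ (Real.sqrt (2 * γ * X t.castSucc ω)))
          * (g r * gaussQ (Real.sqrt (2 * γ * X r.castSucc ω))))
        + 2 * (∑ t : Fin n, g t * gaussQ (Real.sqrt (2 * γ * X t.castSucc ω)))
          * gaussQ (Real.sqrt (2 * γ * X (Fin.last n) ω))) μ :=
      hw1.add (hw2int' γ)
    rw [integral_sub hu hw]
    rw [hUval γ]
    rw [integral_add hw1 (hw2int' γ)]
    rw [integral_const_mul, hw1val γ]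
    congr 1
    congr 1
    have hre2 : (fun ω => 2 * (∑ t : Fin n, g t * gaussQ (Real.sqrt (2 * γ * X t.castSucc ω)))
        * gaussQ (Real.sqrt (2 * γ * X (Fin.last n) ω)))
        = fun ω => 2 * ((∑ t : Fin n, g t * gaussQ (Real.sqrt (2 * γ * X t.castSucc ω)))
            * gaussQ (Real.sqrt (2 * γ * X (Fin.last n) ω))) := by
      funext ω; ring
    rw [hre2, integral_const_mul, hw2val γ]
  have hclaimL : ∀ γ : ℝ, ((∑ t : Fin n, g t * e t.castSucc γ) + e (Fin.last n) γ)
        - (2 * (∑ t : Fin n, ∑ r ∈ Finset.Ioi t,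
              (g t * g r) * (e t.castSucc γ * e r.castSucc γ))
           + 2 * (∑ t : Fin n, g t * (e t.castSucc γ * e (Fin.last n) γ)))
      ≤ ∫ ω, (PA γ ω + PY γ ω - 2 * PA γ ω * PY γ ω) ∂μ := by
    intro γ
    rw [← hLval γ]
    exact integral_mono (hLint γ) (hfint γ) (fun ω => (hbounds γ ω).1)
  -- limits of the two bounds
  have hUlim : Tendsto (fun γ => 4*γ*((∑ t : Fin n, g t * e t.castSucc γ) + e (Fin.last n) γ))
      atTop (nhds ((∑ t : Fin n, g t / σsq t.castSucc) + 1 / σsq (Fin.last n))) := by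
    have h1 : Tendsto (fun γ => (∑ t : Fin n, g t * (4*γ*e t.castSucc γ)) + 4*γ*e (Fin.last n) γ)
        atTop (nhds ((∑ t : Fin n, g t * (1/σsq t.castSucc)) + 1/σsq (Fin.last n))) :=
      (tendsto_finset_sum _ (fun t _ => ((hlim t.castSucc).const_mul (g t)))).add
        (hlim (Fin.last n))
    have h2 : (∑ t : Fin n, g t * (1/σsq t.castSucc)) = ∑ t : Fin n, g t / σsq t.castSucc :=
      Finset.sum_congr rfl (fun t _ => by rw [mul_one_div])
    rw [h2] at h1
    apply h1.congr
    intro γ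
    rw [mul_add, Finset.mul_sum]
    congr 1
    exact Finset.sum_congr rfl (fun t _ => by ring)
  have herrlim : Tendsto (fun γ => 4*γ*(2 * (∑ t : Fin n, ∑ r ∈ Finset.Ioi t,
        (g t * g r) * (e t.castSucc γ * e r.castSucc γ))
      + 2 * (∑ t : Fin n, g t * (e t.castSucc γ * e (Fin.last n) γ)))) atTop (nhds 0) := by
    have hterm1 : ∀ t r : Fin n, Tendsto
        (fun γ => (g t * g r) * ((4*γ*e t.castSucc γ) * e r.castSucc γ)) atTop (nhds 0) := by
      intro t r
      have h := ((hlim t.castSucc).mul (hlim0 r.castSucc)).const_mul (g t * g r)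
      simpa using h
    have h1 : Tendsto (fun γ => ∑ t : Fin n, ∑ r ∈ Finset.Ioi t,
        (g t * g r) * ((4*γ*e t.castSucc γ) * e r.castSucc γ)) atTop (nhds 0) := by
      have h := tendsto_finset_sum (Finset.univ : Finset (Fin n))
        (fun t (_ : t ∈ Finset.univ) =>
          tendsto_finset_sum (Finset.Ioi t) (fun r _ => hterm1 t r))
      simpa using h
    have hterm2 : ∀ t : Fin n, Tendsto
        (fun γ => g t * (e t.castSucc γ * (4*γ*e (Fin.last n) γ))) atTop (nhds 0) := by
      intro t
      have h := ((hlim0 t.castSucc).mul (hlim (Fin.last n))).const_mul (g t)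
      simpa using h
    have h2 : Tendsto (fun γ => ∑ t : Fin n, g t * (e t.castSucc γ * (4*γ*e (Fin.last n) γ)))
        atTop (nhds 0) := by
      have h := tendsto_finset_sum (Finset.univ : Finset (Fin n))
        (fun t (_ : t ∈ Finset.univ) => hterm2 t)
      simpa using h
    have h3 := (h1.const_mul (2:ℝ)).add (h2.const_mul (2:ℝ))
    rw [mul_zero, add_zero] at h3
    apply h3.congr
    intro γ
    have hs1 : (∑ t : Fin n, ∑ r ∈ Finset.Ioi t,
          (g t * g r) * ((4*γ*e t.castSucc γ) * e r.castSucc γ))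
        = (4*γ) * ∑ t : Fin n, ∑ r ∈ Finset.Ioi t,
            (g t * g r) * (e t.castSucc γ * e r.castSucc γ) := by
      rw [Finset.mul_sum]
      apply Finset.sum_congr rfl
      intro t _
      rw [Finset.mul_sum]
      exact Finset.sum_congr rfl (fun r _ => by ring)
    have hs2 : (∑ t : Fin n, g t * (e t.castSucc γ * (4*γ*e (Fin.last n) γ)))
        = (4*γ) * ∑ t : Fin n, g t * (e t.castSucc γ * e (Fin.last n) γ) := by
      rw [Finset.mul_sum]
      exact Finset.sum_congr rfl (fun t _ => by ring)
    rw [hs1, hs2]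
    ring
  have hlow : Tendsto (fun γ => 4*γ*(((∑ t : Fin n, g t * e t.castSucc γ) + e (Fin.last n) γ)
      - (2 * (∑ t : Fin n, ∑ r ∈ Finset.Ioi t,
            (g t * g r) * (e t.castSucc γ * e r.castSucc γ))
         + 2 * (∑ t : Fin n, g t * (e t.castSucc γ * e (Fin.last n) γ)))))
      atTop (nhds ((∑ t : Fin n, g t / σsq t.castSucc) + 1 / σsq (Fin.last n))) := by
    have h := hUlim.sub herrlim
    rw [sub_zero] at h
    apply h.congr
    intro γ
    ring
  apply tendsto_of_tendsto_of_tendsto_of_le_of_le' hlow hUlim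
  · filter_upwards [eventually_ge_atTop 0] with γ hγ
    exact mul_le_mul_of_nonneg_left (hclaimL γ) (by linarith : (0:ℝ) ≤ 4*γ)
  · filter_upwards [eventually_ge_atTop 0] with γ hγ
    exact mul_le_mul_of_nonneg_left (hclaimU γ) (by linarith : (0:ℝ) ≤ 4*γ)
end
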